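/- For any smooth function φ: ℍ × ℂ → ℂ and any A ∈ Γᴶ = SL₂(ℤ) ⋉ ℤ², the lowering operator D₋⁽ᵐ⁾ := ((τ-τ̄)/2i)·(-(τ-τ̄)∂_τ̄ - (z-z̄)∂_z̄ + (1/4πm)((τ-τ̄)/2i)∂_z̄∂_z̄) intertwines the weight-(k,m) and weight-(k-2,m) Jacobi slash actions: D₋⁽ᵐ⁾(φ)|_{k-2,m} A = D₋⁽ᵐ⁾(φ|_{k,m} A). -/

import Mathlib

open Complex Real

/-- The Wirtinger derivative `∂_z̄ f = ½(∂_x + i∂_y)f` of `f : ℂ → ℂ`. -/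
noncomputable def wirtingerBar (f : ℂ → ℂ) (z : ℂ) : ℂ :=
  (1 / 2) * (fderiv ℝ f z 1 + Complex.I * fderiv ℝ f z Complex.I)

/-- `∂_τ̄` in the first variable of `φ : ℂ → ℂ → ℂ`. -/
noncomputable def dTauBar (φ : ℂ → ℂ → ℂ) (τ z : ℂ) : ℂ := wirtingerBar (fun w => φ w z) τ

/-- `∂_z̄` in the second variable of `φ : ℂ → ℂ → ℂ`. -/
noncomputable def dZBar (φ : ℂ → ℂ → ℂ) (τ z : ℂ) : ℂ := wirtingerBar (φ τ) z

namespace DminusAux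

lemma halfL (L : ℂ →L[ℝ] ℂ) (w : ℂ) :
    (1/2 : ℂ) * (L w + Complex.I * L (Complex.I * w)) =
      ((1/2 : ℂ) * (L 1 + Complex.I * L Complex.I)) * (starRingEnd ℂ) w := by
  have key : ∀ u : ℂ, L u = (u.re : ℂ) * L 1 + (u.im : ℂ) * L Complex.I := by
    intro u
    calc L u = L (u.re • (1 : ℂ) + u.im • Complex.I) := by
          congr 1
          simp [Complex.real_smul]
    _ = (u.re : ℂ) * L 1 + (u.im : ℂ) * L Complex.I := by
          rw [map_add, map_smul, map_smul, Complex.real_smul, Complex.real_smul]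
  have hconj : (starRingEnd ℂ) w = (w.re : ℂ) - (w.im : ℂ) * Complex.I := by
    simp [Complex.ext_iff]
  rw [key w, key (Complex.I * w), hconj]
  simp only [Complex.mul_re, Complex.mul_im, Complex.I_re, Complex.I_im]
  push_cast
  ring_nf
  linear_combination ((w.im : ℂ) * L Complex.I / 2) * Complex.I_sq


lemma fderiv_fst (F : ℂ × ℂ → ℂ) (τ z v : ℂ) (hF : DifferentiableAt ℝ F (τ, z)) :
    fderiv ℝ (fun t => F (t, z)) τ v = fderiv ℝ F (τ, z) (v, 0) := by
  have h : HasFDerivAt (fun t : ℂ => (t, z)) (ContinuousLinearMap.inl ℝ ℂ ℂ) τ :=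
    (hasFDerivAt_id τ).prodMk (hasFDerivAt_const z τ)
  have hc : HasFDerivAt (fun t => F (t, z))
      ((fderiv ℝ F (τ, z)).comp (ContinuousLinearMap.inl ℝ ℂ ℂ)) τ :=
    hF.hasFDerivAt.comp τ h
  rw [hc.fderiv]
  rfl

lemma fderiv_snd (F : ℂ × ℂ → ℂ) (τ z v : ℂ) (hF : DifferentiableAt ℝ F (τ, z)) :
    fderiv ℝ (fun w => F (τ, w)) z v = fderiv ℝ F (τ, z) (0, v) := by
  have h : HasFDerivAt (fun w : ℂ => (τ, w)) (ContinuousLinearMap.inr ℝ ℂ ℂ) z :=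
    (hasFDerivAt_const τ z).prodMk (hasFDerivAt_id z)
  have hc : HasFDerivAt (fun w => F (τ, w))
      ((fderiv ℝ F (τ, z)).comp (ContinuousLinearMap.inr ℝ ℂ ℂ)) z :=
    hF.hasFDerivAt.comp z h
  rw [hc.fderiv]
  rfl

lemma dTauBar_eq (φ : ℂ → ℂ → ℂ) (τ z : ℂ)
    (hF : DifferentiableAt ℝ (fun p : ℂ × ℂ => φ p.1 p.2) (τ, z)) :
    dTauBar φ τ z = (1/2 : ℂ) * (fderiv ℝ (fun p : ℂ × ℂ => φ p.1 p.2) (τ, z) (1, 0) +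
      Complex.I * fderiv ℝ (fun p : ℂ × ℂ => φ p.1 p.2) (τ, z) (Complex.I, 0)) := by
  unfold dTauBar wirtingerBar
  rw [fderiv_fst _ _ _ _ hF, fderiv_fst _ _ _ _ hF]

lemma dZBar_eq (φ : ℂ → ℂ → ℂ) (τ z : ℂ)
    (hF : DifferentiableAt ℝ (fun p : ℂ × ℂ => φ p.1 p.2) (τ, z)) :
    dZBar φ τ z = (1/2 : ℂ) * (fderiv ℝ (fun p : ℂ × ℂ => φ p.1 p.2) (τ, z) (0, 1) +
      Complex.I * fderiv ℝ (fun p : ℂ × ℂ => φ p.1 p.2) (τ, z) (0, Complex.I)) := by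
  unfold dZBar wirtingerBar
  rw [fderiv_snd _ _ _ _ hF, fderiv_snd _ _ _ _ hF]

lemma wbar_comp (φ : ℂ → ℂ → ℂ) (hφ : ContDiff ℝ (⊤ : ℕ∞) (fun p : ℂ × ℂ => φ p.1 p.2))
    (g₁ g₂ : ℂ → ℂ) (x d₁ d₂ : ℂ) (h1 : HasDerivAt g₁ d₁ x) (h2 : HasDerivAt g₂ d₂ x) :
    wirtingerBar (fun t => φ (g₁ t) (g₂ t)) x =
      dTauBar φ (g₁ x) (g₂ x) * (starRingEnd ℂ) d₁ +
        dZBar φ (g₁ x) (g₂ x) * (starRingEnd ℂ) d₂ := by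
  set F := fun p : ℂ × ℂ => φ p.1 p.2 with hFdef
  have hFd : DifferentiableAt ℝ F (g₁ x, g₂ x) := (hφ.differentiable (by simp)).differentiableAt
  have hG : HasFDerivAt (fun t : ℂ => (g₁ t, g₂ t))
      (((ContinuousLinearMap.smulRight (1 : ℂ →L[ℂ] ℂ) d₁).prod
        (ContinuousLinearMap.smulRight (1 : ℂ →L[ℂ] ℂ) d₂)).restrictScalars ℝ) x :=
    ((h1.hasFDerivAt.prodMk h2.hasFDerivAt)).restrictScalars ℝ
  have hc : HasFDerivAt (fun t => φ (g₁ t) (g₂ t))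
      ((fderiv ℝ F (g₁ x, g₂ x)).comp
        (((ContinuousLinearMap.smulRight (1 : ℂ →L[ℂ] ℂ) d₁).prod
          (ContinuousLinearMap.smulRight (1 : ℂ →L[ℂ] ℂ) d₂)).restrictScalars ℝ)) x :=
    by have := hFd.hasFDerivAt.comp x hG; exact this
  unfold wirtingerBar
  rw [hc.fderiv]
  have happ : ∀ v : ℂ, ((fderiv ℝ F (g₁ x, g₂ x)).comp
      (((ContinuousLinearMap.smulRight (1 : ℂ →L[ℂ] ℂ) d₁).prod
        (ContinuousLinearMap.smulRight (1 : ℂ →L[ℂ] ℂ) d₂)).restrictScalars ℝ)) v =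
      fderiv ℝ F (g₁ x, g₂ x) (v * d₁, 0) + fderiv ℝ F (g₁ x, g₂ x) (0, v * d₂) := by
    intro v
    rw [ContinuousLinearMap.comp_apply, ← map_add]
    congr 1
    simp [Prod.ext_iff]
  rw [happ, happ]
  have L1 := halfL ((fderiv ℝ F (g₁ x, g₂ x)).comp (ContinuousLinearMap.inl ℝ ℂ ℂ)) d₁
  have L2 := halfL ((fderiv ℝ F (g₁ x, g₂ x)).comp (ContinuousLinearMap.inr ℝ ℂ ℂ)) d₂
  simp only [ContinuousLinearMap.comp_apply, ContinuousLinearMap.inl_apply,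
    ContinuousLinearMap.inr_apply] at L1 L2
  rw [dTauBar_eq φ _ _ hFd, dZBar_eq φ _ _ hFd]
  rw [show (Complex.I * d₁, (0:ℂ)) = ((Complex.I * d₁ : ℂ), (0:ℂ)) from rfl]
  calc (1/2 : ℂ) * (fderiv ℝ F (g₁ x, g₂ x) (1 * d₁, 0) + fderiv ℝ F (g₁ x, g₂ x) (0, 1 * d₂) +
        Complex.I * (fderiv ℝ F (g₁ x, g₂ x) (Complex.I * d₁, 0) +
          fderiv ℝ F (g₁ x, g₂ x) (0, Complex.I * d₂)))
      = (1/2 : ℂ) * (fderiv ℝ F (g₁ x, g₂ x) (d₁, 0) +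
          Complex.I * fderiv ℝ F (g₁ x, g₂ x) (Complex.I * d₁, 0)) +
        (1/2 : ℂ) * (fderiv ℝ F (g₁ x, g₂ x) (0, d₂) +
          Complex.I * fderiv ℝ F (g₁ x, g₂ x) (0, Complex.I * d₂)) := by
        rw [one_mul, one_mul]; ring
    _ = _ := by rw [L1, L2]

lemma wbar_mul (h f : ℂ → ℂ) (x : ℂ) (hh : DifferentiableAt ℂ h x)
    (hf : DifferentiableAt ℝ f x) :
    wirtingerBar (fun t => h t * f t) x = h x * wirtingerBar f x := by
  have hhr : DifferentiableAt ℝ h x := hh.restrictScalars ℝ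
  have hD : ∀ v : ℂ, fderiv ℝ h x v = v * deriv h x := by
    intro v
    rw [(hh.hasFDerivAt.restrictScalars ℝ).fderiv]
    have : fderiv ℂ h x v = v • fderiv ℂ h x 1 := by
      rw [← (fderiv ℂ h x).map_smul v 1, smul_eq_mul, mul_one]
    simp only [ContinuousLinearMap.coe_restrictScalars', this, smul_eq_mul]
    rw [fderiv_apply_one_eq_deriv]
  unfold wirtingerBar
  rw [fderiv_fun_mul hhr hf]
  simp only [ContinuousLinearMap.add_apply, ContinuousLinearMap.smul_apply, smul_eq_mul]
  rw [hD 1, hD Complex.I]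
  linear_combination ((1/2 : ℂ) * f x * deriv h x) * Complex.I_sq

lemma wbar_mul_comp (φ : ℂ → ℂ → ℂ) (hφ : ContDiff ℝ (⊤ : ℕ∞) (fun p : ℂ × ℂ => φ p.1 p.2))
    (h g₁ g₂ : ℂ → ℂ) (x d₁ d₂ : ℂ) (hh : DifferentiableAt ℂ h x)
    (h1 : HasDerivAt g₁ d₁ x) (h2 : HasDerivAt g₂ d₂ x) :
    wirtingerBar (fun t => h t * φ (g₁ t) (g₂ t)) x =
      h x * (dTauBar φ (g₁ x) (g₂ x) * (starRingEnd ℂ) d₁ +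
        dZBar φ (g₁ x) (g₂ x) * (starRingEnd ℂ) d₂) := by
  have hf : DifferentiableAt ℝ (fun t => φ (g₁ t) (g₂ t)) x := by
    have hG : DifferentiableAt ℝ (fun t : ℂ => (g₁ t, g₂ t)) x :=
      ((h1.differentiableAt.restrictScalars ℝ).prodMk (h2.differentiableAt.restrictScalars ℝ))
    exact ((hφ.differentiable (by simp)) (g₁ x, g₂ x)).comp x hG
  rw [wbar_mul h _ x hh hf, wbar_comp φ hφ g₁ g₂ x d₁ d₂ h1 h2]

lemma contDiff_dZBar (φ : ℂ → ℂ → ℂ) (hφ : ContDiff ℝ (⊤ : ℕ∞) (fun p : ℂ × ℂ => φ p.1 p.2)) :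
    ContDiff ℝ (⊤ : ℕ∞) (fun p : ℂ × ℂ => dZBar φ p.1 p.2) := by
  have heq : (fun p : ℂ × ℂ => dZBar φ p.1 p.2) = fun p : ℂ × ℂ =>
      (1/2 : ℂ) * (fderiv ℝ (fun q : ℂ × ℂ => φ q.1 q.2) p (0, 1) +
        Complex.I * fderiv ℝ (fun q : ℂ × ℂ => φ q.1 q.2) p (0, Complex.I)) := by
    funext p
    exact dZBar_eq φ p.1 p.2 ((hφ.differentiable (by simp)).differentiableAt)
  rw [heq]
  have hfd : ContDiff ℝ (⊤ : ℕ∞) (fderiv ℝ (fun q : ℂ × ℂ => φ q.1 q.2)) := hφ.fderiv_right (by simp)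
  exact contDiff_const.mul ((hfd.clm_apply contDiff_const).add
    (contDiff_const.mul (hfd.clm_apply contDiff_const)))

end DminusAux

/-- The lowering operator
`D₋⁽ᵐ⁾ = ((τ-τ̄)/2i)·(-(τ-τ̄)∂_τ̄ - (z-z̄)∂_z̄ + (1/4πm)((τ-τ̄)/2i)∂_z̄∂_z̄)`. -/
noncomputable def Dminus (m : ℤ) (φ : ℂ → ℂ → ℂ) : ℂ → ℂ → ℂ := fun τ z =>
  ((τ - (starRingEnd ℂ) τ) / (2 * Complex.I)) *
    (-(τ - (starRingEnd ℂ) τ) * dTauBar φ τ z - (z - (starRingEnd ℂ) z) * dZBar φ τ z +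
      (1 / (4 * Real.pi * (m : ℂ))) * ((τ - (starRingEnd ℂ) τ) / (2 * Complex.I)) *
        dZBar (fun t w => dZBar φ t w) τ z)

/-- The weight `k`, index `m` Jacobi slash action of
`A = [(a,b;c,d),(λ,μ)] ∈ SL₂(ℤ) ⋉ ℤ²` on `φ : ℂ → ℂ → ℂ`. -/
noncomputable def jacobiSlash (k m : ℤ) (a b c d l μ : ℤ) (φ : ℂ → ℂ → ℂ) : ℂ → ℂ → ℂ :=
  fun τ z =>
    ((c : ℂ) * τ + (d : ℂ)) ^ (-k) *
      Complex.exp (2 * Real.pi * Complex.I * (m : ℂ) *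
        (-(c : ℂ) * (z + (l : ℂ) * τ + (μ : ℂ)) ^ 2 / ((c : ℂ) * τ + (d : ℂ)) +
          (l : ℂ) ^ 2 * τ + 2 * (l : ℂ) * z)) *
      φ (((a : ℂ) * τ + (b : ℂ)) / ((c : ℂ) * τ + (d : ℂ)))
        ((z + (l : ℂ) * τ + (μ : ℂ)) / ((c : ℂ) * τ + (d : ℂ)))

set_option maxHeartbeats 4000000

open DminusAux

/-- For any smooth `φ : ℍ × ℂ → ℂ` and `A ∈ SL₂(ℤ) ⋉ ℤ²`, the lowering operator
intertwines the slash actions: `D₋⁽ᵐ⁾(φ)|_{k-2,m} A = D₋⁽ᵐ⁾(φ|_{k,m} A)`. -/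
theorem Dminus_intertwines (k m : ℤ) (hm : 0 < m) (φ : ℂ → ℂ → ℂ)
    (hφ : ContDiff ℝ (⊤ : ℕ∞) (fun p : ℂ × ℂ => φ p.1 p.2))
    (a b c d l μ : ℤ) (hA : a * d - b * c = 1) (τ z : ℂ) (hτ : 0 < τ.im) :
    jacobiSlash (k - 2) m a b c d l μ (Dminus m φ) τ z =
      Dminus m (jacobiSlash k m a b c d l μ φ) τ z := by
  have hAc : (a : ℂ) * d - b * c = 1 := by exact_mod_cast hA
  have hd0 : d ≠ 0 ∨ c ≠ 0 := by
    rcases eq_or_ne c 0 with hc | hc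
    · left; rintro rfl; rw [hc] at hA; simp at hA
    · right; exact hc
  have hden : ∀ σ : ℂ, σ.im ≠ 0 → (c : ℂ) * σ + d ≠ 0 := by
    intro σ hσ h0
    rcases eq_or_ne c 0 with hc | hc
    · have hd : d ≠ 0 := by
        rcases hd0 with h | h
        · exact h
        · exact absurd hc h
      rw [hc] at h0
      simp at h0
      exact hd (by exact_mod_cast h0)
    · have : ((c : ℂ) * σ + d).im = 0 := by rw [h0]; rfl
      simp [Complex.add_im, Complex.mul_im] at this
      rcases this with h | h
      · exact hc (by exact_mod_cast h)
      · exact hσ h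
  have hN : (c : ℂ) * τ + d ≠ 0 := hden τ (ne_of_gt hτ)
  have hNc : (c : ℂ) * ((starRingEnd ℂ) τ) + d ≠ 0 := by
    apply hden
    simp only [Complex.conj_im]
    exact neg_ne_zero.mpr (ne_of_gt hτ)
  have hm' : (m : ℂ) ≠ 0 := by
    exact_mod_cast hm.ne'
  have hπ : (Real.pi : ℂ) ≠ 0 := Complex.ofReal_ne_zero.mpr Real.pi_ne_zero
  -- derivative of t ↦ (a t + b)/(c t + d) at τ
  have hg1 : HasDerivAt (fun t : ℂ => ((a : ℂ) * t + b) / ((c : ℂ) * t + d))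
      (1 / ((c : ℂ) * τ + d) ^ 2) τ := by
    have h1 : HasDerivAt (fun t : ℂ => (a : ℂ) * t + b) (a : ℂ) τ := by
      simpa using ((hasDerivAt_id τ).const_mul (a : ℂ)).add_const (b : ℂ)
    have h2 : HasDerivAt (fun t : ℂ => (c : ℂ) * t + d) (c : ℂ) τ := by
      simpa using ((hasDerivAt_id τ).const_mul (c : ℂ)).add_const (d : ℂ)
    have h := h1.div h2 hN
    have he : (1 / ((c : ℂ) * τ + d) ^ 2) = ((a : ℂ) * ((c : ℂ) * τ + d) - ((a : ℂ) * τ + b) * c) / ((c : ℂ) * τ + d) ^ 2 := by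
      rw [div_eq_div_iff (pow_ne_zero 2 hN) (pow_ne_zero 2 hN)]
      linear_combination (-((c : ℂ) * τ + d) ^ 2) * hAc
    rw [← he] at h
    exact h
  -- derivative of t ↦ (z + l t + μ)/(c t + d) at τ
  have hg2 : HasDerivAt (fun t : ℂ => (z + (l : ℂ) * t + μ) / ((c : ℂ) * t + d))
      (((l : ℂ) * ((c : ℂ) * τ + d) - (z + (l : ℂ) * τ + μ) * c) / ((c : ℂ) * τ + d) ^ 2) τ := by
    have h1 : HasDerivAt (fun t : ℂ => z + (l : ℂ) * t + μ) (l : ℂ) τ := by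
      simpa using (((hasDerivAt_id τ).const_mul (l : ℂ)).const_add z).add_const (μ : ℂ)
    have h2 : HasDerivAt (fun t : ℂ => (c : ℂ) * t + d) (c : ℂ) τ := by
      simpa using ((hasDerivAt_id τ).const_mul (c : ℂ)).add_const (d : ℂ)
    exact h1.div h2 hN
  -- derivative of y ↦ (y + lτ + μ)/(cτ+d) at any w
  have hgz : ∀ w : ℂ, HasDerivAt (fun y : ℂ => (y + (l : ℂ) * τ + μ) / ((c : ℂ) * τ + d))
      (1 / ((c : ℂ) * τ + d)) w := by
    intro w
    simpa using (((hasDerivAt_id w).add_const ((l : ℂ) * τ)).add_const (μ : ℂ)).div_const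
      ((c : ℂ) * τ + d)
  -- differentiability of the (z-)automorphy factor
  have hhz : ∀ w : ℂ, DifferentiableAt ℂ (fun y : ℂ => ((c : ℂ) * τ + d) ^ (-k) *
      Complex.exp (2 * (Real.pi : ℂ) * Complex.I * (m : ℂ) *
        (-(c : ℂ) * (y + (l : ℂ) * τ + (μ : ℂ)) ^ 2 / ((c : ℂ) * τ + (d : ℂ)) +
          (l : ℂ) ^ 2 * τ + 2 * (l : ℂ) * y))) w := by
    intro w
    apply DifferentiableAt.const_mul
    apply DifferentiableAt.cexp
    apply DifferentiableAt.const_mul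
    apply DifferentiableAt.add
    apply DifferentiableAt.add
    · exact ((((differentiableAt_id.add_const _).add_const _).pow 2).const_mul _).div_const _
    · exact differentiableAt_const _
    · exact differentiableAt_id.const_mul _
  -- differentiability of the (τ-)automorphy factor
  have hh2 : DifferentiableAt ℂ (fun t : ℂ => ((c : ℂ) * t + d) ^ (-k) *
      Complex.exp (2 * (Real.pi : ℂ) * Complex.I * (m : ℂ) *
        (-(c : ℂ) * (z + (l : ℂ) * t + (μ : ℂ)) ^ 2 / ((c : ℂ) * t + (d : ℂ)) +
          (l : ℂ) ^ 2 * t + 2 * (l : ℂ) * z))) τ := by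
    have hlin : DifferentiableAt ℂ (fun t : ℂ => (c : ℂ) * t + d) τ :=
      (differentiableAt_id.const_mul _).add_const _
    apply DifferentiableAt.mul
    · exact DifferentiableAt.comp τ (differentiableAt_zpow.mpr (Or.inl hN)) hlin
    · apply DifferentiableAt.cexp
      apply DifferentiableAt.const_mul
      apply DifferentiableAt.add
      apply DifferentiableAt.add
      · apply DifferentiableAt.div _ hlin hN
        exact (((differentiableAt_id.const_mul _).const_add _).add_const _).pow 2 |>.const_mul _
      · exact (differentiableAt_id.const_mul _)
      · exact differentiableAt_const _
  -- (i) dTauBar of the slashed function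
  have hi : dTauBar (jacobiSlash k m a b c d l μ φ) τ z =
      (((c : ℂ) * τ + (d : ℂ)) ^ (-k) * Complex.exp (2 * (Real.pi : ℂ) * Complex.I * (m : ℂ) * (-(c : ℂ) * (z + (l : ℂ) * τ + (μ : ℂ)) ^ 2 / ((c : ℂ) * τ + (d : ℂ)) + (l : ℂ) ^ 2 * τ + 2 * (l : ℂ) * z))) *
        (dTauBar φ (((a : ℂ) * τ + (b : ℂ)) / ((c : ℂ) * τ + (d : ℂ))) ((z + (l : ℂ) * τ + (μ : ℂ)) / ((c : ℂ) * τ + (d : ℂ))) * (starRingEnd ℂ) (1 / ((c : ℂ) * τ + d) ^ 2) +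
         dZBar φ (((a : ℂ) * τ + (b : ℂ)) / ((c : ℂ) * τ + (d : ℂ))) ((z + (l : ℂ) * τ + (μ : ℂ)) / ((c : ℂ) * τ + (d : ℂ))) * (starRingEnd ℂ) (((l : ℂ) * ((c : ℂ) * τ + d) - (z + (l : ℂ) * τ + μ) * c) / ((c : ℂ) * τ + d) ^ 2)) :=
    wbar_mul_comp φ hφ
      (fun t : ℂ => ((c : ℂ) * t + (d : ℂ)) ^ (-k) * Complex.exp (2 * (Real.pi : ℂ) * Complex.I * (m : ℂ) * (-(c : ℂ) * (z + (l : ℂ) * t + (μ : ℂ)) ^ 2 / ((c : ℂ) * t + (d : ℂ)) + (l : ℂ) ^ 2 * t + 2 * (l : ℂ) * z)))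
      (fun t : ℂ => ((a : ℂ) * t + (b : ℂ)) / ((c : ℂ) * t + (d : ℂ)))
      (fun t : ℂ => (z + (l : ℂ) * t + (μ : ℂ)) / ((c : ℂ) * t + (d : ℂ)))
      τ _ _ hh2 hg1 hg2
  -- (ii) dZBar of the slashed function, at any w
  have hii : ∀ w : ℂ, dZBar (jacobiSlash k m a b c d l μ φ) τ w =
      (((c : ℂ) * τ + (d : ℂ)) ^ (-k) * Complex.exp (2 * (Real.pi : ℂ) * Complex.I * (m : ℂ) * (-(c : ℂ) * (w + (l : ℂ) * τ + (μ : ℂ)) ^ 2 / ((c : ℂ) * τ + (d : ℂ)) + (l : ℂ) ^ 2 * τ + 2 * (l : ℂ) * w))) *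
        (dTauBar φ (((a : ℂ) * τ + (b : ℂ)) / ((c : ℂ) * τ + (d : ℂ))) ((w + (l : ℂ) * τ + (μ : ℂ)) / ((c : ℂ) * τ + (d : ℂ))) * (starRingEnd ℂ) 0 +
         dZBar φ (((a : ℂ) * τ + (b : ℂ)) / ((c : ℂ) * τ + (d : ℂ))) ((w + (l : ℂ) * τ + (μ : ℂ)) / ((c : ℂ) * τ + (d : ℂ))) * (starRingEnd ℂ) (1 / ((c : ℂ) * τ + d))) := fun w =>
    wbar_mul_comp φ hφ
      (fun y : ℂ => ((c : ℂ) * τ + (d : ℂ)) ^ (-k) * Complex.exp (2 * (Real.pi : ℂ) * Complex.I * (m : ℂ) * (-(c : ℂ) * (y + (l : ℂ) * τ + (μ : ℂ)) ^ 2 / ((c : ℂ) * τ + (d : ℂ)) + (l : ℂ) ^ 2 * τ + 2 * (l : ℂ) * y)))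
      (fun _ : ℂ => (((a : ℂ) * τ + (b : ℂ)) / ((c : ℂ) * τ + (d : ℂ))))
      (fun y : ℂ => (y + (l : ℂ) * τ + (μ : ℂ)) / ((c : ℂ) * τ + (d : ℂ)))
      w 0 _ (hhz w) (hasDerivAt_const w _) (hgz w)
  have hfun2 : (fun w => dZBar (jacobiSlash k m a b c d l μ φ) τ w) =
      fun w => ((((c : ℂ) * τ + (d : ℂ)) ^ (-k) * Complex.exp (2 * (Real.pi : ℂ) * Complex.I * (m : ℂ) * (-(c : ℂ) * (w + (l : ℂ) * τ + (μ : ℂ)) ^ 2 / ((c : ℂ) * τ + (d : ℂ)) + (l : ℂ) ^ 2 * τ + 2 * (l : ℂ) * w))) * (starRingEnd ℂ) (1 / ((c : ℂ) * τ + d))) *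
        dZBar φ (((a : ℂ) * τ + (b : ℂ)) / ((c : ℂ) * τ + (d : ℂ))) ((w + (l : ℂ) * τ + (μ : ℂ)) / ((c : ℂ) * τ + (d : ℂ))) := by
    funext w
    rw [hii w]
    simp only [map_zero, mul_zero, zero_add]
    ring
  -- (iii) second dZBar
  have hiii : dZBar (fun t w => dZBar (jacobiSlash k m a b c d l μ φ) t w) τ z =
      ((((c : ℂ) * τ + (d : ℂ)) ^ (-k) * Complex.exp (2 * (Real.pi : ℂ) * Complex.I * (m : ℂ) * (-(c : ℂ) * (z + (l : ℂ) * τ + (μ : ℂ)) ^ 2 / ((c : ℂ) * τ + (d : ℂ)) + (l : ℂ) ^ 2 * τ + 2 * (l : ℂ) * z))) * (starRingEnd ℂ) (1 / ((c : ℂ) * τ + d))) *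
        (dTauBar (fun t w => dZBar φ t w) (((a : ℂ) * τ + (b : ℂ)) / ((c : ℂ) * τ + (d : ℂ))) ((z + (l : ℂ) * τ + (μ : ℂ)) / ((c : ℂ) * τ + (d : ℂ))) * (starRingEnd ℂ) 0 +
         dZBar (fun t w => dZBar φ t w) (((a : ℂ) * τ + (b : ℂ)) / ((c : ℂ) * τ + (d : ℂ))) ((z + (l : ℂ) * τ + (μ : ℂ)) / ((c : ℂ) * τ + (d : ℂ))) * (starRingEnd ℂ) (1 / ((c : ℂ) * τ + d))) := by
    rw [show dZBar (fun t w => dZBar (jacobiSlash k m a b c d l μ φ) t w) τ z =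
      wirtingerBar (fun w => dZBar (jacobiSlash k m a b c d l μ φ) τ w) z from rfl, hfun2]
    exact wbar_mul_comp (fun t w => dZBar φ t w) (contDiff_dZBar φ hφ)
      (fun y : ℂ => (((c : ℂ) * τ + (d : ℂ)) ^ (-k) * Complex.exp (2 * (Real.pi : ℂ) * Complex.I * (m : ℂ) * (-(c : ℂ) * (y + (l : ℂ) * τ + (μ : ℂ)) ^ 2 / ((c : ℂ) * τ + (d : ℂ)) + (l : ℂ) ^ 2 * τ + 2 * (l : ℂ) * y))) * (starRingEnd ℂ) (1 / ((c : ℂ) * τ + d)))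
      (fun _ : ℂ => (((a : ℂ) * τ + (b : ℂ)) / ((c : ℂ) * τ + (d : ℂ))))
      (fun y : ℂ => (y + (l : ℂ) * τ + (μ : ℂ)) / ((c : ℂ) * τ + (d : ℂ)))
      z 0 _ ((hhz z).mul_const _) (hasDerivAt_const z _) (hgz z)
  have hzpow : ((c : ℂ) * τ + (d : ℂ)) ^ (-(k - 2)) = ((c : ℂ) * τ + (d : ℂ)) ^ (-k) * (((c : ℂ) * τ + (d : ℂ)) * ((c : ℂ) * τ + (d : ℂ))) := by
    rw [show -(k - 2) = -k + 2 from by ring, zpow_add₀ hN, zpow_two]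
  have lhs_eq : jacobiSlash (k - 2) m a b c d l μ (Dminus m φ) τ z =
      ((c : ℂ) * τ + (d : ℂ)) ^ (-(k - 2)) * Complex.exp (2 * (Real.pi : ℂ) * Complex.I * (m : ℂ) * (-(c : ℂ) * (z + (l : ℂ) * τ + (μ : ℂ)) ^ 2 / ((c : ℂ) * τ + (d : ℂ)) + (l : ℂ) ^ 2 * τ + 2 * (l : ℂ) * z)) *
        ((((((a : ℂ) * τ + (b : ℂ)) / ((c : ℂ) * τ + (d : ℂ))) - (starRingEnd ℂ) (((a : ℂ) * τ + (b : ℂ)) / ((c : ℂ) * τ + (d : ℂ)))) / (2 * Complex.I)) *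
          (-((((a : ℂ) * τ + (b : ℂ)) / ((c : ℂ) * τ + (d : ℂ))) - (starRingEnd ℂ) (((a : ℂ) * τ + (b : ℂ)) / ((c : ℂ) * τ + (d : ℂ)))) * dTauBar φ (((a : ℂ) * τ + (b : ℂ)) / ((c : ℂ) * τ + (d : ℂ))) ((z + (l : ℂ) * τ + (μ : ℂ)) / ((c : ℂ) * τ + (d : ℂ))) -
            (((z + (l : ℂ) * τ + (μ : ℂ)) / ((c : ℂ) * τ + (d : ℂ))) - (starRingEnd ℂ) ((z + (l : ℂ) * τ + (μ : ℂ)) / ((c : ℂ) * τ + (d : ℂ)))) * dZBar φ (((a : ℂ) * τ + (b : ℂ)) / ((c : ℂ) * τ + (d : ℂ))) ((z + (l : ℂ) * τ + (μ : ℂ)) / ((c : ℂ) * τ + (d : ℂ))) +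
            (1 / (4 * (Real.pi : ℂ) * (m : ℂ))) * (((((a : ℂ) * τ + (b : ℂ)) / ((c : ℂ) * τ + (d : ℂ))) - (starRingEnd ℂ) (((a : ℂ) * τ + (b : ℂ)) / ((c : ℂ) * τ + (d : ℂ)))) / (2 * Complex.I)) *
              dZBar (fun t w => dZBar φ t w) (((a : ℂ) * τ + (b : ℂ)) / ((c : ℂ) * τ + (d : ℂ))) ((z + (l : ℂ) * τ + (μ : ℂ)) / ((c : ℂ) * τ + (d : ℂ))))) := rfl
  have rhs_eq : Dminus m (jacobiSlash k m a b c d l μ φ) τ z =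
      ((τ - (starRingEnd ℂ) τ) / (2 * Complex.I)) *
        (-(τ - (starRingEnd ℂ) τ) * dTauBar (jacobiSlash k m a b c d l μ φ) τ z - (z - (starRingEnd ℂ) z) * dZBar (jacobiSlash k m a b c d l μ φ) τ z +
          (1 / (4 * (Real.pi : ℂ) * (m : ℂ))) * ((τ - (starRingEnd ℂ) τ) / (2 * Complex.I)) *
            dZBar (fun t w => dZBar (jacobiSlash k m a b c d l μ φ) t w) τ z) := rfl
  rw [lhs_eq, rhs_eq, hi, hii z, hiii, hzpow]
  simp only [map_div₀, map_add, map_mul, map_sub, map_neg, map_pow, map_one, map_zero,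
    map_intCast, map_ofNat]
  have key : ∀ A B C : ℂ,
      (((c : ℂ) * τ + (d : ℂ)) * ((c : ℂ) * τ + (d : ℂ))) * ((((a : ℂ) * τ + (b : ℂ)) / ((c : ℂ) * τ + (d : ℂ)) - ((a : ℂ) * ((starRingEnd ℂ) τ) + (b : ℂ)) / ((c : ℂ) * ((starRingEnd ℂ) τ) + (d : ℂ))) / (2 * Complex.I) *
        (-(((a : ℂ) * τ + (b : ℂ)) / ((c : ℂ) * τ + (d : ℂ)) - ((a : ℂ) * ((starRingEnd ℂ) τ) + (b : ℂ)) / ((c : ℂ) * ((starRingEnd ℂ) τ) + (d : ℂ))) * A - ((z + (l : ℂ) * τ + (μ : ℂ)) / ((c : ℂ) * τ + (d : ℂ)) - (((starRingEnd ℂ) z) + (l : ℂ) * ((starRingEnd ℂ) τ) + (μ : ℂ)) / ((c : ℂ) * ((starRingEnd ℂ) τ) + (d : ℂ))) * B +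
          (1 / (4 * (Real.pi : ℂ) * (m : ℂ))) * ((((a : ℂ) * τ + (b : ℂ)) / ((c : ℂ) * τ + (d : ℂ)) - ((a : ℂ) * ((starRingEnd ℂ) τ) + (b : ℂ)) / ((c : ℂ) * ((starRingEnd ℂ) τ) + (d : ℂ))) / (2 * Complex.I)) * C)) =
      (τ - (starRingEnd ℂ) τ) / (2 * Complex.I) *
        (-(τ - (starRingEnd ℂ) τ) * (A * (1 / ((c : ℂ) * ((starRingEnd ℂ) τ) + (d : ℂ)) ^ 2) + B * (((l : ℂ) * ((c : ℂ) * ((starRingEnd ℂ) τ) + (d : ℂ)) - (((starRingEnd ℂ) z) + (l : ℂ) * ((starRingEnd ℂ) τ) + (μ : ℂ)) * (c : ℂ)) / ((c : ℂ) * ((starRingEnd ℂ) τ) + (d : ℂ)) ^ 2)) -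
          (z - (starRingEnd ℂ) z) * (B * (1 / ((c : ℂ) * ((starRingEnd ℂ) τ) + (d : ℂ)))) +
          (1 / (4 * (Real.pi : ℂ) * (m : ℂ))) * ((τ - (starRingEnd ℂ) τ) / (2 * Complex.I)) * (C * ((1 / ((c : ℂ) * ((starRingEnd ℂ) τ) + (d : ℂ))) * (1 / ((c : ℂ) * ((starRingEnd ℂ) τ) + (d : ℂ)))))) := by
    intro A B C
    have hsub : ((a : ℂ) * τ + (b : ℂ)) / ((c : ℂ) * τ + (d : ℂ)) - ((a : ℂ) * ((starRingEnd ℂ) τ) + (b : ℂ)) / ((c : ℂ) * ((starRingEnd ℂ) τ) + (d : ℂ)) =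
        (τ - (starRingEnd ℂ) τ) / (((c : ℂ) * τ + (d : ℂ)) * ((c : ℂ) * ((starRingEnd ℂ) τ) + (d : ℂ))) := by
      rw [div_sub_div _ _ hN hNc,
        show ((a : ℂ) * τ + (b : ℂ)) * ((c : ℂ) * ((starRingEnd ℂ) τ) + (d : ℂ)) - ((c : ℂ) * τ + (d : ℂ)) * ((a : ℂ) * ((starRingEnd ℂ) τ) + (b : ℂ)) =
          τ - (starRingEnd ℂ) τ from by linear_combination (τ - (starRingEnd ℂ) τ) * hAc]
    rw [hsub]
    have kA : (((c : ℂ) * τ + (d : ℂ))*((c : ℂ) * τ + (d : ℂ))) * (((τ - (starRingEnd ℂ) τ)/(((c : ℂ) * τ + (d : ℂ))*((c : ℂ) * ((starRingEnd ℂ) τ) + (d : ℂ))))/(2 * Complex.I)) * ((τ - (starRingEnd ℂ) τ)/(((c : ℂ) * τ + (d : ℂ))*((c : ℂ) * ((starRingEnd ℂ) τ) + (d : ℂ)))) =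
        ((τ - (starRingEnd ℂ) τ)/(2 * Complex.I)) * ((τ - (starRingEnd ℂ) τ)*(1/((c : ℂ) * ((starRingEnd ℂ) τ) + (d : ℂ))^2)) := by
      field_simp
    have kB : (((c : ℂ) * τ + (d : ℂ))*((c : ℂ) * τ + (d : ℂ))) * (((τ - (starRingEnd ℂ) τ)/(((c : ℂ) * τ + (d : ℂ))*((c : ℂ) * ((starRingEnd ℂ) τ) + (d : ℂ))))/(2 * Complex.I)) *
        ((z + (l : ℂ) * τ + (μ : ℂ))/((c : ℂ) * τ + (d : ℂ)) - (((starRingEnd ℂ) z) + (l : ℂ) * ((starRingEnd ℂ) τ) + (μ : ℂ))/((c : ℂ) * ((starRingEnd ℂ) τ) + (d : ℂ))) =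
        ((τ - (starRingEnd ℂ) τ)/(2 * Complex.I)) * ((τ - (starRingEnd ℂ) τ)*(((l : ℂ)*((c : ℂ) * ((starRingEnd ℂ) τ) + (d : ℂ)) - (((starRingEnd ℂ) z) + (l : ℂ) * ((starRingEnd ℂ) τ) + (μ : ℂ))*(c : ℂ))/((c : ℂ) * ((starRingEnd ℂ) τ) + (d : ℂ))^2) +
          (z - ((starRingEnd ℂ) z))*(1/((c : ℂ) * ((starRingEnd ℂ) τ) + (d : ℂ)))) := by
      field_simp
      ring
    have kC : (((c : ℂ) * τ + (d : ℂ))*((c : ℂ) * τ + (d : ℂ))) * (((τ - (starRingEnd ℂ) τ)/(((c : ℂ) * τ + (d : ℂ))*((c : ℂ) * ((starRingEnd ℂ) τ) + (d : ℂ))))/(2 * Complex.I)) * (((τ - (starRingEnd ℂ) τ)/(((c : ℂ) * τ + (d : ℂ))*((c : ℂ) * ((starRingEnd ℂ) τ) + (d : ℂ))))/(2 * Complex.I)) =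
        ((τ - (starRingEnd ℂ) τ)/(2 * Complex.I)) * ((τ - (starRingEnd ℂ) τ)/(2 * Complex.I)) * ((1/((c : ℂ) * ((starRingEnd ℂ) τ) + (d : ℂ))) * (1/((c : ℂ) * ((starRingEnd ℂ) τ) + (d : ℂ)))) := by
      field_simp
    linear_combination (-A)*kA + (-B)*kB + ((1/(4 * (Real.pi : ℂ) * (m : ℂ)))*C)*kC
  linear_combination (((c : ℂ) * τ + (d : ℂ)) ^ (-k) *
    Complex.exp (2 * (Real.pi : ℂ) * Complex.I * (m : ℂ) *
      (-(c : ℂ) * (z + (l : ℂ) * τ + (μ : ℂ)) ^ 2 / ((c : ℂ) * τ + (d : ℂ)) +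
        (l : ℂ) ^ 2 * τ + 2 * (l : ℂ) * z))) *
    key (dTauBar φ (((a : ℂ) * τ + (b : ℂ)) / ((c : ℂ) * τ + (d : ℂ))) ((z + (l : ℂ) * τ + (μ : ℂ)) / ((c : ℂ) * τ + (d : ℂ)))) (dZBar φ (((a : ℂ) * τ + (b : ℂ)) / ((c : ℂ) * τ + (d : ℂ))) ((z + (l : ℂ) * τ + (μ : ℂ)) / ((c : ℂ) * τ + (d : ℂ)))) (dZBar (fun t w => dZBar φ t w) (((a : ℂ) * τ + (b : ℂ)) / ((c : ℂ) * τ + (d : ℂ))) ((z + (l : ℂ) * τ + (μ : ℂ)) / ((c : ℂ) * τ + (d : ℂ))))
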